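/- Let G be a finite simple graph with m edges and reliability polynomial R(G). Then for every q ∈ [0,1], q(1−q)|R(G)'(q)| ≤ m · (1 − R(G)(q)). -/

import Mathlib

/-- `relCoeff G i` is the number of `i`-element subsets `S` of the edge set of `G` such that
the spanning subgraph `(V, S)` is connected. -/
noncomputable def relCoeff {V : Type*} [Fintype V] (G : SimpleGraph V) (i : ℕ) : ℕ :=
  {S : Finset (Sym2 V) | ↑S ⊆ G.edgeSet ∧ S.card = i ∧
    (SimpleGraph.fromEdgeSet (↑S : Set (Sym2 V))).Connected}.ncard

/-- The number of edges of `G`. -/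
noncomputable def numEdges {V : Type*} [Fintype V] (G : SimpleGraph V) : ℕ :=
  G.edgeSet.ncard

/-- The all-terminal reliability polynomial of `G`, as a real function of the
edge failure probability `q`. -/
noncomputable def rel {V : Type*} [Fintype V] (G : SimpleGraph V) (q : ℝ) : ℝ :=
  ∑ i ∈ Finset.range (numEdges G + 1),
    (relCoeff G i : ℝ) * (1 - q) ^ i * q ^ (numEdges G - i)

/-- The reliability polynomial of the complete graph on `n` vertices. -/
noncomputable def relK (n : ℕ) : ℝ → ℝ := rel (⊤ : SimpleGraph (Fin n))

/-!
Write `p = 1 - q` and `R = ∑ᵢ Nᵢ pⁱ q^(m-i)`. Differentiating termwise,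
`q p R' = ∑ᵢ Nᵢ ((m-i) p^(i+1) q^(m-i) - i pⁱ q^(m-i+1))`, and after shifting the index of the
second part, `q p R' = ∑_{i<m} ((m-i) Nᵢ - (i+1) Nᵢ₊₁) p^(i+1) q^(m-i)`. Every bracket is `≤ 0`:
double count the pairs `(T, e)` of a connected spanning edge set `T` of size `i` and an edge
`e ∉ T`, noting that `T ∪ {e}` is again connected. Hence `|q p R'| = -q p R'`.
By the binomial theorem `1 - R = ∑ᵢ (C(m,i) - Nᵢ) pⁱ q^(m-i)` has nonnegative coefficients, and for
such a sum dropping the negative terms of the first identity bounds `q p (1 - R)' = -q p R'`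
by `m (1 - R)`.
-/

open Finset

theorem Finset.sub_mul_card_filter_powersetCard_le {α : Type*} [DecidableEq α]
    {P : Finset α → Prop} [DecidablePred P] (hP : ∀ ⦃S T⦄, S ⊆ T → P S → P T)
    (E : Finset α) (i : ℕ) :
    (#E - i) * #{S ∈ E.powersetCard i | P S} ≤ (i + 1) * #{S ∈ E.powersetCard (i + 1) | P S} := by
  rw [mul_comm, mul_comm (i + 1)]
  refine card_mul_le_card_mul (· ⊆ ·) (fun T hT => ?_) (fun S hS => ?_)
  · obtain ⟨hT', hPT⟩ := mem_filter.mp hT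
    obtain ⟨hTE, hTi⟩ := mem_powersetCard.mp hT'
    rw [← hTi, ← card_sdiff_of_subset hTE]
    refine card_le_card_of_injOn (insert · T) (fun e he => ?_) (fun e he e' _ h => ?_)
    · obtain ⟨heE, heT⟩ := mem_sdiff.mp he
      simp only [coe_bipartiteAbove, Set.mem_ofPred_eq, mem_filter, mem_powersetCard]
      exact ⟨⟨⟨insert_subset heE hTE, by rw [card_insert_of_notMem heT, hTi]⟩,
        hP (subset_insert e T) hPT⟩, subset_insert e T⟩
    · exact (insert_inj (mem_sdiff.mp he).2).mp h
  · have hSi : #S = i + 1 := (mem_powersetCard.mp (mem_filter.mp hS).1).2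
    calc #(bipartiteBelow (· ⊆ ·) _ S) ≤ #(S.powersetCard i) := by
          refine card_le_card (fun T hT => ?_)
          simp only [mem_bipartiteBelow, mem_filter, mem_powersetCard] at hT ⊢
          exact ⟨hT.2, hT.1.1.2⟩
      _ = i + 1 := by rw [card_powersetCard, hSi, Nat.choose_succ_self_right]

noncomputable def bernsteinSum (m : ℕ) (a : ℕ → ℝ) (q : ℝ) : ℝ :=
  ∑ i ∈ range (m + 1), a i * (1 - q) ^ i * q ^ (m - i)

theorem bernsteinSum_choose_sub (m : ℕ) (a : ℕ → ℝ) :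
    bernsteinSum m (fun i => m.choose i - a i) = fun q => 1 - bernsteinSum m a q := by
  funext q
  have hbinom : ∑ i ∈ range (m + 1), (1 - q) ^ i * q ^ (m - i) * m.choose i = 1 := by
    rw [← add_pow, sub_add_cancel, one_pow]
  rw [bernsteinSum, bernsteinSum, eq_sub_iff_add_eq, ← sum_add_distrib]
  exact (sum_congr rfl fun i _ => by ring).trans hbinom

theorem mul_mul_pow_pred {R : Type*} [CommSemiring R] (x : R) (k : ℕ) :
    x * (k * x ^ (k - 1)) = k * x ^ k := by
  cases k with
  | zero => simp
  | succ k => rw [Nat.add_sub_cancel, pow_succ]; ring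

theorem mul_one_sub_mul_deriv_one_sub_pow_mul_pow (i j : ℕ) (q : ℝ) :
    q * (1 - q) * deriv (fun x => (1 - x) ^ i * x ^ j) q
      = j * (1 - q) ^ (i + 1) * q ^ j - i * (1 - q) ^ i * q ^ (j + 1) := by
  have hderiv : HasDerivAt (fun x => (1 - x) ^ i * x ^ j)
      ((i * (1 - q) ^ (i - 1) * -1) * q ^ j + (1 - q) ^ i * (j * q ^ (j - 1))) q :=
    (((hasDerivAt_id q).const_sub 1).pow i).mul (hasDerivAt_pow j q)
  rw [hderiv.deriv]
  linear_combination (1 - q) ^ (i + 1) * mul_mul_pow_pred q j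
    - q ^ (j + 1) * mul_mul_pow_pred (1 - q) i

theorem mul_one_sub_mul_deriv_bernsteinSum (m : ℕ) (a : ℕ → ℝ) (q : ℝ) :
    q * (1 - q) * deriv (bernsteinSum m a) q = ∑ i ∈ range (m + 1), a i *
      ((m - i : ℕ) * (1 - q) ^ (i + 1) * q ^ (m - i) - i * (1 - q) ^ i * q ^ (m - i + 1)) := by
  have hsum : bernsteinSum m a =
      fun x => ∑ i ∈ range (m + 1), a i * ((1 - x) ^ i * x ^ (m - i)) := by
    funext x; simp only [bernsteinSum, mul_assoc]
  rw [hsum, deriv_fun_sum fun i _ => by fun_prop, mul_sum]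
  refine sum_congr rfl fun i _ => ?_
  rw [deriv_const_mul _ (by fun_prop), ← mul_one_sub_mul_deriv_one_sub_pow_mul_pow]
  ring

theorem mul_one_sub_mul_deriv_bernsteinSum_eq_sum_range (m : ℕ) (a : ℕ → ℝ) (q : ℝ) :
    q * (1 - q) * deriv (bernsteinSum m a) q = ∑ i ∈ range m,
      ((m - i : ℕ) * a i - (i + 1) * a (i + 1)) * ((1 - q) ^ (i + 1) * q ^ (m - i)) := by
  rw [mul_one_sub_mul_deriv_bernsteinSum]
  simp only [mul_sub, sum_sub_distrib]
  rw [sum_range_succ, sum_range_succ' (fun i => a i * (i * (1 - q) ^ i * q ^ (m - i + 1)))]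
  simp only [Nat.sub_self, Nat.cast_zero, zero_mul, mul_zero, add_zero, ← sum_sub_distrib]
  refine sum_congr rfl fun i hi => ?_
  rw [show m - (i + 1) + 1 = m - i by have := mem_range.mp hi; omega]
  push_cast
  ring

theorem mul_one_sub_mul_deriv_bernsteinSum_nonpos {m : ℕ} {a : ℕ → ℝ}
    (ha : ∀ i < m, (m - i : ℕ) * a i ≤ (i + 1) * a (i + 1)) {q : ℝ} (hq : q ∈ Set.Icc 0 1) :
    q * (1 - q) * deriv (bernsteinSum m a) q ≤ 0 := by
  rw [mul_one_sub_mul_deriv_bernsteinSum_eq_sum_range]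
  refine sum_nonpos fun i hi => mul_nonpos_of_nonpos_of_nonneg ?_ ?_
  · exact sub_nonpos.mpr (ha i (mem_range.mp hi))
  · exact mul_nonneg (pow_nonneg (sub_nonneg.mpr hq.2) _) (pow_nonneg hq.1 _)

theorem mul_one_sub_mul_deriv_bernsteinSum_le {m : ℕ} {a : ℕ → ℝ} (ha : ∀ i, 0 ≤ a i)
    {q : ℝ} (hq : q ∈ Set.Icc 0 1) :
    q * (1 - q) * deriv (bernsteinSum m a) q ≤ m * bernsteinSum m a q := by
  obtain ⟨hq0, hq1⟩ := hq
  rw [mul_one_sub_mul_deriv_bernsteinSum, bernsteinSum, mul_sum]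
  refine sum_le_sum fun i _ => ?_
  have hb : 0 ≤ (1 - q) ^ i * q ^ (m - i) :=
    mul_nonneg (pow_nonneg (sub_nonneg.mpr hq1) _) (pow_nonneg hq0 _)
  have hk : ((m - i : ℕ) : ℝ) * (1 - q) ≤ m :=
    (mul_le_of_le_one_right (Nat.cast_nonneg _) (by linarith)).trans (by exact_mod_cast m.sub_le i)
  calc a i * ((m - i : ℕ) * (1 - q) ^ (i + 1) * q ^ (m - i) - i * (1 - q) ^ i * q ^ (m - i + 1))
      = a i * ((m - i : ℕ) * (1 - q)) * ((1 - q) ^ i * q ^ (m - i))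
        - a i * i * q * ((1 - q) ^ i * q ^ (m - i)) := by ring
    _ ≤ a i * m * ((1 - q) ^ i * q ^ (m - i)) := by
      have hdrop : 0 ≤ a i * i * q * ((1 - q) ^ i * q ^ (m - i)) :=
        mul_nonneg (mul_nonneg (mul_nonneg (ha i) i.cast_nonneg) hq0) hb
      have hscale := mul_le_mul_of_nonneg_right (mul_le_mul_of_nonneg_left hk (ha i)) hb
      linarith
    _ = m * (a i * (1 - q) ^ i * q ^ (m - i)) := by ring

section Reliability

open SimpleGraph

variable {V : Type*} [Fintype V] (G : SimpleGraph V)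

open Classical in
theorem relCoeff_eq_card_filter (i : ℕ) :
    relCoeff G i = #((G.edgeFinset.powersetCard i).filter
      fun S : Finset (Sym2 V) => (fromEdgeSet (S : Set (Sym2 V))).Connected) := by
  rw [relCoeff, ← Set.ncard_coe_finset]
  refine congrArg Set.ncard (Set.ext fun S => ?_)
  simp [mem_powersetCard, ← coe_subset, and_assoc]

theorem numEdges_eq_card_edgeFinset [DecidableEq V] [DecidableRel G.Adj] :
    numEdges G = #G.edgeFinset := by
  rw [numEdges, ← coe_edgeFinset, Set.ncard_coe_finset]

theorem relCoeff_le_choose (i : ℕ) : relCoeff G i ≤ (numEdges G).choose i := by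
  classical
  rw [relCoeff_eq_card_filter, numEdges_eq_card_edgeFinset, ← card_powersetCard]
  apply card_filter_le

theorem numEdges_sub_mul_relCoeff_le (i : ℕ) :
    (numEdges G - i) * relCoeff G i ≤ (i + 1) * relCoeff G (i + 1) := by
  classical
  rw [relCoeff_eq_card_filter, relCoeff_eq_card_filter, numEdges_eq_card_edgeFinset]
  exact sub_mul_card_filter_powersetCard_le
    (fun S T hST hS => hS.mono (fromEdgeSet_mono (coe_subset.mpr hST))) _ i

end Reliability

/-- For a finite simple graph `G` with `m` edges, for every `q ∈ [0,1]`,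
`q(1-q)|R(G)'(q)| ≤ m · (1 - R(G)(q))`. -/
theorem rel_deriv_le_one_sub_rel {V : Type*} [Fintype V] (G : SimpleGraph V) :
    ∀ q ∈ Set.Icc (0 : ℝ) 1,
      q * (1 - q) * |deriv (rel G) q| ≤ (numEdges G : ℝ) * (1 - rel G q) := by
  intro q hq
  have hrel : rel G = bernsteinSum (numEdges G) (fun i => relCoeff G i) := rfl
  have hnonpos : q * (1 - q) * deriv (rel G) q ≤ 0 := hrel ▸
    mul_one_sub_mul_deriv_bernsteinSum_nonpos
      (fun i _ => by exact_mod_cast numEdges_sub_mul_relCoeff_le G i) hq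
  have hcompl : q * (1 - q) * deriv (fun x => 1 - rel G x) q ≤ numEdges G * (1 - rel G q) := by
    have hcoeff (i : ℕ) : 0 ≤ ((numEdges G).choose i : ℝ) - relCoeff G i :=
      sub_nonneg.mpr (by exact_mod_cast relCoeff_le_choose G i)
    simpa only [bernsteinSum_choose_sub, ← hrel] using
      mul_one_sub_mul_deriv_bernsteinSum_le (m := numEdges G) hcoeff hq
  rw [deriv_const_sub] at hcompl
  have hq₀ : 0 ≤ q * (1 - q) := mul_nonneg hq.1 (sub_nonneg.mpr hq.2)
  rw [← abs_of_nonneg hq₀, ← abs_mul, abs_of_nonpos hnonpos]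
  linarith
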